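/- arXiv:2007.14925 — 3 statements merged into one kernel-verified Lean document; each statement's English description precedes it below -/
import Mathlib

section
/- Splitting decomposition: let D be open, let f = ℐ(F) with F a C¹ stem function, let J ∈ 𝕊 and let J₁ ∈ 𝕊 with JJ₁ = −J₁J (so {1, J, J₁, JJ₁} is a real vector basis of ℍ). Write the restriction f_J : Ω_D(J) → ℍ uniquely as f_J = f₀ + f₁J₁ with f₀, f₁ : Ω_D(J) → ℂ_J. Then f is slice regular if and only if both f₀ and f₁ are holomorphic with respect to J, i.e. ∂f_ℓ/∂α_h + J·∂f_ℓ/∂β_h = 0 on Ω_D(J) for ℓ ∈ {0,1} and every h ∈ {1,…,n}, where points of (ℂ_J)ⁿ are written (α₁+Jβ₁,…,αₙ+Jβₙ). -/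
noncomputable section

abbrev ℍ := Quaternion ℝ

/-- The sphere of quaternionic imaginary units. -/
def Sph : Set ℍ := {J | J ^ 2 = -1}

/-- The complex slice `ℂ_J = {a + b J : a b : ℝ}`. -/
def CJ (J : ℍ) : Set ℍ := {x | ∃ a b : ℝ, x = (a : ℍ) + (b : ℍ) * J}

variable {n : ℕ}

/-- Conjugation of the `h`-th complex coordinate. -/
def conjCoord (h : Fin n) (z : Fin n → ℂ) : Fin n → ℂ :=
  Function.update z h (starRingEnd ℂ (z h))

/-- Quaternionic conjugation of the coordinates with index in `H`. -/
def conjQ (H : Finset (Fin n)) (x : Fin n → ℍ) : Fin n → ℍ :=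
  fun h => if h ∈ H then star (x h) else x h

/-- Ordered product `J_K` of the values of `J` over `K`, in increasing index order. -/
def JK (J : Fin n → ℍ) (K : Finset (Fin n)) : ℍ :=
  ((K.sort (· ≤ ·)).map J).prod

/-- The complex point with coordinates `α h + i β h`. -/
def zOf (α β : Fin n → ℝ) : Fin n → ℂ :=
  fun h => (α h : ℂ) + (β h : ℂ) * Complex.I

/-- The quaternionic point with coordinates `α h + β h * J h`. -/
def ptOf (α β : Fin n → ℝ) (J : Fin n → ℍ) : Fin n → ℍ :=
  fun h => (α h : ℍ) + (β h : ℍ) * J h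

/-- The circularization `Ω_D` of `D ⊆ ℂⁿ` in `ℍⁿ`. -/
def OmegaD (D : Set (Fin n → ℂ)) : Set (Fin n → ℍ) :=
  {x | ∃ α β : Fin n → ℝ, ∃ J : Fin n → ℍ,
    (∀ h, J h ∈ Sph) ∧ x = ptOf α β J ∧ zOf α β ∈ D}

/-- Invariance of `D` under all coordinatewise complex conjugations. -/
def ConjInv (D : Set (Fin n → ℂ)) : Prop :=
  ∀ h : Fin n, ∀ z ∈ D, conjCoord h z ∈ D

/-- Stem function condition for a family `F = (F_K)`. -/
def IsStem (D : Set (Fin n → ℂ)) (F : Finset (Fin n) → (Fin n → ℂ) → ℍ) : Prop :=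
  ∀ (K : Finset (Fin n)) (h : Fin n), ∀ z ∈ D,
    F K (conjCoord h z) = (if h ∈ K then -1 else 1) * F K z

/-- `f` is the slice function induced by the stem function `F` on `Ω_D`. -/
def Induces (D : Set (Fin n → ℂ)) (F : Finset (Fin n) → (Fin n → ℂ) → ℍ)
    (f : (Fin n → ℍ) → ℍ) : Prop :=
  ∀ (α β : Fin n → ℝ) (J : Fin n → ℍ), (∀ h, J h ∈ Sph) → zOf α β ∈ D →
    f (ptOf α β J) = ∑ K : Finset (Fin n), JK J K * F K (zOf α β)

/-- `f` is a slice function on `Ω_D`. -/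
def IsSlice (D : Set (Fin n → ℂ)) (f : (Fin n → ℍ) → ℍ) : Prop :=
  ∃ F, IsStem D F ∧ Induces D F f

/-- Each component of the stem function is of class `C¹` on `D`. -/
def StemC1 (D : Set (Fin n → ℂ)) (F : Finset (Fin n) → (Fin n → ℂ) → ℍ) : Prop :=
  ∀ K, ContDiffOn ℝ 1 (F K) D

/-- Holomorphy (Cauchy–Riemann system) of a stem function. -/
def StemHolo (D : Set (Fin n → ℂ)) (F : Finset (Fin n) → (Fin n → ℂ) → ℍ) : Prop :=
  ∀ z ∈ D, ∀ h : Fin n, ∀ K : Finset (Fin n), h ∉ K →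
    fderiv ℝ (F K) z (Pi.single h 1) =
      fderiv ℝ (F (insert h K)) z (Pi.single h Complex.I) ∧
    fderiv ℝ (F K) z (Pi.single h Complex.I) =
      -fderiv ℝ (F (insert h K)) z (Pi.single h 1)

/-- `f` is a slice regular function on `Ω_D`. -/
def IsSliceRegular (D : Set (Fin n → ℂ)) (f : (Fin n → ℍ) → ℍ) : Prop :=
  ∃ F, IsStem D F ∧ StemC1 D F ∧ StemHolo D F ∧ Induces D F f

/-- Pointwise product of stem functions associated with `σ`. -/
def SP (σ : Finset (Fin n) → Finset (Fin n) → ℝ)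
    (F G : Finset (Fin n) → (Fin n → ℂ) → ℍ) :
    Finset (Fin n) → (Fin n → ℂ) → ℍ :=
  fun K z => ∑ H : Finset (Fin n), ∑ L : Finset (Fin n),
    if symmDiff H L = K then σ H L • (F H z * G L z) else 0

/-- The tensor-product sign function `σ_⊗(K,H) = (-1)^{|K∩H|}`. -/
def sigmaT : Finset (Fin n) → Finset (Fin n) → ℝ :=
  fun K H => (-1 : ℝ) ^ (K ∩ H).card

/-- The tensor (slice) product of stem functions. -/
def SPT (F G : Finset (Fin n) → (Fin n → ℂ) → ℍ) :
    Finset (Fin n) → (Fin n → ℂ) → ℍ := SP sigmaT F G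

/-- The stem function `∂_h F`. -/
def Dplus (F : Finset (Fin n) → (Fin n → ℂ) → ℍ) (h : Fin n) :
    Finset (Fin n) → (Fin n → ℂ) → ℍ :=
  fun K z => (2 : ℝ)⁻¹ • (fderiv ℝ (F K) z (Pi.single h 1) +
    ((-1 : ℝ) ^ (K ∩ {h}).card) •
      fderiv ℝ (F (symmDiff K {h})) z (Pi.single h Complex.I))

/-- The stem function `∂̄_h F`. -/
def Dminus (F : Finset (Fin n) → (Fin n → ℂ) → ℍ) (h : Fin n) :
    Finset (Fin n) → (Fin n → ℂ) → ℍ :=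
  fun K z => (2 : ℝ)⁻¹ • (fderiv ℝ (F K) z (Pi.single h 1) -
    ((-1 : ℝ) ^ (K ∩ {h}).card) •
      fderiv ℝ (F (symmDiff K {h})) z (Pi.single h Complex.I))

/-- The ordered monomial function `x ↦ x^ℓ a = x₁^{ℓ₁} ⋯ xₙ^{ℓₙ} a`. -/
def mono (ℓ : Fin n → ℕ) (a : ℍ) (x : Fin n → ℍ) : ℍ :=
  (List.ofFn fun h => x h ^ ℓ h).prod * a

/-- The coordinatewise map `φ_J : ℂⁿ → (ℂ_J)ⁿ ⊆ ℍⁿ`. -/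
def phiJ (J : ℍ) (z : Fin n → ℂ) : Fin n → ℍ :=
  fun h => ((z h).re : ℍ) + ((z h).im : ℍ) * J

/-- The standard basis vector `e_K` of `ℝ^{𝒫(n)}`. -/
def eB (K : Finset (Fin n)) : Finset (Fin n) → ℝ := Pi.single K 1

/-- The `Δ`-product on `ℝ^{𝒫(n)}` associated with `σ`. -/
def deltaMulR (σ : Finset (Fin n) → Finset (Fin n) → ℝ)
    (v w : Finset (Fin n) → ℝ) : Finset (Fin n) → ℝ :=
  fun K => ∑ H : Finset (Fin n), ∑ L : Finset (Fin n),
    if symmDiff H L = K then σ H L * v H * w L else 0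

/-!
On the slice `ℂ_Jⁿ` the function `f` becomes `g = ∑_K J^{|K|} F_K`. The components `f₀`, `f₁` are
obtained from `g` by ℝ-linear projections commuting with left multiplication by `J`, so they are
`J`-holomorphic exactly when `g` is. The Cauchy–Riemann expression `∂_{α_h} g + J ∂_{β_h} g` is the
sum over `K` of the defects `w_K = J^{|K|} ∂_{α_h} F_K + J^{|K ∆ {h}|+1} ∂_{β_h} F_{K ∆ {h}}`, whose
vanishing is the holomorphy of `F`. At the point obtained from `z` by conjugating the coordinates in
`E`, the stem symmetries turn this sum into `∑_K (-1)^{|K ∩ E|} w_K`, and the Walsh–Hadamard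
transform is injective; so holomorphy of `g` on all of `D` forces every `w_K` to vanish.
-/

open scoped symmDiff Topology
open Finset

section WalshSign

variable {α : Type*} [DecidableEq α]

theorem Finset.inter_symmDiff_distrib_left (s t u : Finset α) : s ∩ t ∆ u = (s ∩ t) ∆ (s ∩ u) :=
  inf_symmDiff_distrib_left s t u

theorem Finset.inter_symmDiff_distrib_right (s t u : Finset α) : s ∆ t ∩ u = (s ∩ u) ∆ (t ∩ u) :=
  inf_symmDiff_distrib_right s t u

theorem neg_one_pow_card_symmDiff (s t : Finset α) :
    (-1 : ℝ) ^ #(s ∆ t) = (-1) ^ #s * (-1) ^ #t := by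
  have hcard : #(s ∆ t) + 2 * #(s ∩ t) = #s + #t := by
    rw [Finset.symmDiff_def, card_union_of_disjoint disjoint_sdiff_sdiff,
      ← card_sdiff_add_card_inter s t, ← card_sdiff_add_card_inter t s, inter_comm t s]
    ring
  rw [← pow_add, ← hcard, pow_add, pow_mul]
  norm_num

theorem Finset.symmDiff_singleton_of_notMem {s : Finset α} {a : α} (ha : a ∉ s) :
    s ∆ {a} = insert a s := by
  rw [symmDiff_eq_union (disjoint_singleton_right.2 ha), union_comm, ← insert_eq]

variable [Fintype α]

theorem sum_neg_one_pow_card_inter (s : Finset α) :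
    ∑ e : Finset α, (-1 : ℝ) ^ #(s ∩ e) = if s = ∅ then 2 ^ Fintype.card α else 0 := by
  split_ifs with hs
  · simp [hs, card_univ]
  obtain ⟨a, ha⟩ := nonempty_iff_ne_empty.2 hs
  refine sum_ninvolution (fun e => e ∆ {a}) (fun e => ?_) (fun e _ he => ?_) (by simp)
    (fun e => symmDiff_symmDiff_cancel_right {a} e)
  · rw [inter_symmDiff_distrib_left, inter_singleton_of_mem ha, neg_one_pow_card_symmDiff]
    simp
  · have := congrArg (a ∈ ·) he
    simp [mem_symmDiff] at this

/-- Injectivity of the Walsh–Hadamard transform on `Finset α → M`. -/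
theorem eq_zero_of_forall_sum_neg_one_pow_card_inter_smul_eq_zero {M : Type*} [AddCommGroup M]
    [Module ℝ M] {v : Finset α → M} (hv : ∀ e, ∑ k, (-1 : ℝ) ^ #(k ∩ e) • v k = 0)
    (t : Finset α) : v t = 0 := by
  have hsum : ∑ k, (∑ e : Finset α, (-1 : ℝ) ^ #((t ∆ k) ∩ e)) • v k = 0 := by
    simp_rw [inter_symmDiff_distrib_right, neg_one_pow_card_symmDiff, sum_smul, mul_smul]
    rw [sum_comm]
    simp [← smul_sum, hv]
  simp_rw [sum_neg_one_pow_card_inter, symmDiff_eq_empty, ite_smul, zero_smul,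
    sum_ite_eq, mem_univ, if_true] at hsum
  exact (smul_eq_zero.mp hsum).resolve_left (by positivity)

end WalshSign

theorem mul_self_eq_neg_one_of_mem_Sph {J : ℍ} (hJ : J ∈ Sph) : J * J = -1 := by
  rw [← sq]; exact hJ

theorem commute_of_mem_CJ {J x : ℍ} (hx : x ∈ CJ J) : Commute J x := by
  obtain ⟨a, b, rfl⟩ := hx
  exact Commute.add_right (Quaternion.coe_commutes a J).symm
    (Commute.mul_right (Quaternion.coe_commutes b J).symm (Commute.refl J))

/-- For `x, y ∈ ℂ_J`, `splitFst J (x + y J₁) = x` and `splitSnd J J₁ (x + y J₁) = y`. -/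
def splitFst (J : ℍ) : ℍ →L[ℝ] ℍ :=
  (2 : ℝ)⁻¹ • (ContinuousLinearMap.id ℝ ℍ - ContinuousLinearMap.mulLeftRight ℝ ℍ J J)

def splitSnd (J J₁ : ℍ) : ℍ →L[ℝ] ℍ :=
  -((ContinuousLinearMap.mul ℝ ℍ).flip J₁).comp
    ((2 : ℝ)⁻¹ • (ContinuousLinearMap.id ℝ ℍ + ContinuousLinearMap.mulLeftRight ℝ ℍ J J))

@[simp] theorem splitFst_apply (J q : ℍ) : splitFst J q = (2 : ℝ)⁻¹ • (q - J * q * J) := by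
  simp [splitFst]

@[simp] theorem splitSnd_apply (J J₁ q : ℍ) :
    splitSnd J J₁ q = -(((2 : ℝ)⁻¹ • (q + J * q * J)) * J₁) := by
  simp [splitSnd, add_mul, smul_add, add_comm]

theorem splitFst_mul_left (J q : ℍ) : splitFst J (J * q) = J * splitFst J q := by
  simp only [splitFst_apply, mul_smul_comm, mul_sub, mul_assoc]

theorem splitSnd_mul_left (J J₁ q : ℍ) : splitSnd J J₁ (J * q) = J * splitSnd J J₁ q := by
  simp only [splitSnd_apply, mul_neg, mul_smul_comm, smul_mul_assoc, mul_add, add_mul, mul_assoc]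

theorem splitFst_add_splitSnd_mul (J : ℍ) {J₁ : ℍ} (hJ₁ : J₁ ∈ Sph) (q : ℍ) :
    splitFst J q + splitSnd J J₁ q * J₁ = q := by
  simp only [splitFst_apply, splitSnd_apply, neg_mul, smul_mul_assoc, mul_assoc _ J₁ J₁,
    mul_self_eq_neg_one_of_mem_Sph hJ₁, mul_neg_one, smul_neg, neg_neg, ← smul_add]
  rw [show q - J * q * J + (q + J * q * J) = (2 : ℝ) • q by rw [two_smul]; abel, smul_smul]
  norm_num

theorem eq_zero_iff_splitFst_and_splitSnd {J J₁ : ℍ} (hJ₁ : J₁ ∈ Sph) (q : ℍ) :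
    q = 0 ↔ splitFst J q = 0 ∧ splitSnd J J₁ q = 0 := by
  refine ⟨fun hq => by simp [hq], fun ⟨h₀, h₁⟩ => ?_⟩
  rw [← splitFst_add_splitSnd_mul J hJ₁ q, h₀, h₁, zero_mul, add_zero]

theorem mul_add_mul_mul_eq_of_mem_CJ {J J₁ x y : ℍ} (hJ : J ∈ Sph) (hanti : J * J₁ = -(J₁ * J))
    (hx : x ∈ CJ J) (hy : y ∈ CJ J) : J * (x + y * J₁) * J = -x + y * J₁ := by
  calc J * (x + y * J₁) * J = (J * x) * J + (J * y) * J₁ * J := by noncomm_ring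
    _ = x * (J * J) + y * ((J * J₁) * J) := by
        rw [(commute_of_mem_CJ hx).eq, (commute_of_mem_CJ hy).eq]; noncomm_ring
    _ = -x + y * J₁ := by
        rw [hanti, neg_mul, mul_assoc, mul_self_eq_neg_one_of_mem_Sph hJ]; noncomm_ring

theorem splitFst_add_mul {J J₁ x y : ℍ} (hJ : J ∈ Sph) (hanti : J * J₁ = -(J₁ * J))
    (hx : x ∈ CJ J) (hy : y ∈ CJ J) : splitFst J (x + y * J₁) = x := by
  rw [splitFst_apply, mul_add_mul_mul_eq_of_mem_CJ hJ hanti hx hy,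
    show x + y * J₁ - (-x + y * J₁) = (2 : ℝ) • x by rw [two_smul]; abel, smul_smul]
  norm_num

theorem splitSnd_add_mul {J J₁ x y : ℍ} (hJ : J ∈ Sph) (hJ₁ : J₁ ∈ Sph)
    (hanti : J * J₁ = -(J₁ * J)) (hx : x ∈ CJ J) (hy : y ∈ CJ J) :
    splitSnd J J₁ (x + y * J₁) = y := by
  rw [splitSnd_apply, mul_add_mul_mul_eq_of_mem_CJ hJ hanti hx hy,
    show x + y * J₁ + (-x + y * J₁) = (2 : ℝ) • (y * J₁) by rw [two_smul]; abel, smul_smul,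
    smul_mul_assoc, mul_assoc, mul_self_eq_neg_one_of_mem_Sph hJ₁]
  norm_num

section Conjugation

def conjSet (E : Finset (Fin n)) : (Fin n → ℂ) →L[ℝ] (Fin n → ℂ) :=
  ContinuousLinearMap.pi fun h =>
    if h ∈ E then Complex.conjCLE.toContinuousLinearMap.comp (ContinuousLinearMap.proj h)
    else ContinuousLinearMap.proj h

theorem conjSet_apply (E : Finset (Fin n)) (z : Fin n → ℂ) (h : Fin n) :
    conjSet E z h = if h ∈ E then starRingEnd ℂ (z h) else z h := by
  by_cases hh : h ∈ E <;> simp [conjSet, hh]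

@[simp] theorem conjSet_empty (z : Fin n → ℂ) : conjSet ∅ z = z := by
  funext h; simp [conjSet_apply]

theorem conjSet_insert {a : Fin n} {E : Finset (Fin n)} (ha : a ∉ E) (z : Fin n → ℂ) :
    conjSet (insert a E) z = conjCoord a (conjSet E z) := by
  funext h
  by_cases hh : h = a
  · subst hh; simp [conjCoord, conjSet_apply, ha]
  · simp [conjCoord, conjSet_apply, hh]

theorem conjSet_single (E : Finset (Fin n)) (h : Fin n) (c : ℂ) :
    conjSet E (Pi.single h c) = Pi.single h (if h ∈ E then starRingEnd ℂ c else c) := by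
  funext k
  by_cases hk : k = h
  · subst hk; simp [conjSet_apply]
  · by_cases hkE : k ∈ E <;> simp [conjSet_apply, hk, hkE]

variable {D : Set (Fin n → ℂ)} {F : Finset (Fin n) → (Fin n → ℂ) → ℍ}

theorem ConjInv.conjSet_mem (hinv : ConjInv D) (E : Finset (Fin n)) {z : Fin n → ℂ}
    (hz : z ∈ D) : conjSet E z ∈ D := by
  induction E using Finset.induction_on with
  | empty => simpa using hz
  | insert a E ha ih => rw [conjSet_insert ha]; exact hinv a _ ih

theorem IsStem.apply_conjSet (hF : IsStem D F) (hinv : ConjInv D) (E K : Finset (Fin n))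
    {z : Fin n → ℂ} (hz : z ∈ D) : F K (conjSet E z) = (-1 : ℝ) ^ #(K ∩ E) • F K z := by
  induction E using Finset.induction_on with
  | empty => simp
  | insert a E ha ih =>
    rw [conjSet_insert ha, hF K a _ (hinv.conjSet_mem E hz), ih]
    by_cases haK : a ∈ K
    · have ha' : a ∉ K ∩ E := fun h => ha (mem_of_mem_inter_right h)
      simp [haK, inter_insert_of_mem haK, card_insert_of_notMem ha', pow_succ]
    · simp [haK, inter_insert_of_notMem haK]

theorem StemC1.differentiableAt (hC1 : StemC1 D F) (hD : IsOpen D) (K : Finset (Fin n))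
    {z : Fin n → ℂ} (hz : z ∈ D) : DifferentiableAt ℝ (F K) z :=
  ((hC1 K).differentiableOn one_ne_zero z hz).differentiableAt (hD.mem_nhds hz)

theorem IsStem.fderiv_conjSet (hF : IsStem D F) (hinv : ConjInv D) (hC1 : StemC1 D F)
    (hD : IsOpen D) (E K : Finset (Fin n)) {z : Fin n → ℂ} (hz : z ∈ D) (v : Fin n → ℂ) :
    fderiv ℝ (F K) (conjSet E z) (conjSet E v) = (-1 : ℝ) ^ #(K ∩ E) • fderiv ℝ (F K) z v := by
  have hcomp := (hC1.differentiableAt hD K (hinv.conjSet_mem E hz)).hasFDerivAt.comp z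
    (conjSet E).hasFDerivAt
  have hsmul : HasFDerivAt (F K ∘ conjSet E) ((-1 : ℝ) ^ #(K ∩ E) • fderiv ℝ (F K) z) z :=
    ((hC1.differentiableAt hD K hz).hasFDerivAt.const_smul _).congr_of_eventuallyEq <|
      Filter.eventuallyEq_of_mem (hD.mem_nhds hz) fun w hw => hF.apply_conjSet hinv E K hw
  exact DFunLike.congr_fun (hcomp.unique hsmul) v

end Conjugation

section SliceRestriction

variable {D : Set (Fin n → ℂ)} {F : Finset (Fin n) → (Fin n → ℂ) → ℍ} {J : ℍ}

def restrictSlice (J : ℍ) (F : Finset (Fin n) → (Fin n → ℂ) → ℍ) (z : Fin n → ℂ) : ℍ :=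
  ∑ K, J ^ #K * F K z

theorem JK_const (J : ℍ) (K : Finset (Fin n)) : JK (fun _ => J) K = J ^ #K := by
  rw [JK, List.map_const', List.prod_replicate, length_sort]

theorem Induces.apply_phiJ {f : (Fin n → ℍ) → ℍ} (hf : Induces D F f) (hJ : J ∈ Sph)
    {z : Fin n → ℂ} (hz : z ∈ D) : f (phiJ J z) = restrictSlice J F z := by
  have hzOf : zOf (fun h => (z h).re) (fun h => (z h).im) = z :=
    funext fun h => Complex.re_add_im (z h)
  have hfz := hf (fun h => (z h).re) (fun h => (z h).im) (fun _ => J) (fun _ => hJ)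
    (hzOf.symm ▸ hz)
  rw [hzOf] at hfz
  simp only [JK_const] at hfz
  exact hfz

theorem hasFDerivAt_restrictSlice {z : Fin n → ℂ} (hF : ∀ K, DifferentiableAt ℝ (F K) z) :
    HasFDerivAt (restrictSlice J F) (∑ K, J ^ #K • fderiv ℝ (F K) z) z :=
  HasFDerivAt.fun_sum fun K _ => (hF K).hasFDerivAt.const_mul _

def dbar (J : ℍ) (g : (Fin n → ℂ) → ℍ) (z : Fin n → ℂ) (h : Fin n) : ℍ :=
  fderiv ℝ g z (Pi.single h 1) + J * fderiv ℝ g z (Pi.single h Complex.I)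

theorem dbar_of_eventuallyEq_comp {P : ℍ →L[ℝ] ℍ} (hP : ∀ q, P (J * q) = J * P q)
    {f g : (Fin n → ℂ) → ℍ} {z : Fin n → ℂ} (hg : DifferentiableAt ℝ g z)
    (hfg : f =ᶠ[𝓝 z] P ∘ g) (h : Fin n) : dbar J f z h = P (dbar J g z h) := by
  simp only [dbar, hfg.fderiv_eq, fderiv_comp z P.differentiableAt hg, P.fderiv,
    ContinuousLinearMap.comp_apply, map_add, hP]

theorem dbar_eq_zero_iff_of_eventually_eq_add_mul {J₁ : ℍ} (hJ : J ∈ Sph) (hJ₁ : J₁ ∈ Sph)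
    (hanti : J * J₁ = -(J₁ * J)) {g f₀ f₁ : (Fin n → ℂ) → ℍ} (h₀ : ∀ z, f₀ z ∈ CJ J)
    (h₁ : ∀ z, f₁ z ∈ CJ J) {z : Fin n → ℂ} (hdec : ∀ᶠ w in 𝓝 z, g w = f₀ w + f₁ w * J₁)
    (hg : DifferentiableAt ℝ g z) (h : Fin n) :
    dbar J g z h = 0 ↔ dbar J f₀ z h = 0 ∧ dbar J f₁ z h = 0 := by
  have hf₀ : f₀ =ᶠ[𝓝 z] splitFst J ∘ g := hdec.mono fun w hw => by
    rw [Function.comp_apply, hw, splitFst_add_mul hJ hanti (h₀ w) (h₁ w)]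
  have hf₁ : f₁ =ᶠ[𝓝 z] splitSnd J J₁ ∘ g := hdec.mono fun w hw => by
    rw [Function.comp_apply, hw, splitSnd_add_mul hJ hJ₁ hanti (h₀ w) (h₁ w)]
  rw [dbar_of_eventuallyEq_comp (splitFst_mul_left J) hg hf₀,
    dbar_of_eventuallyEq_comp (splitSnd_mul_left J J₁) hg hf₁]
  exact eq_zero_iff_splitFst_and_splitSnd hJ₁ _

def stemDefect (J : ℍ) (F : Finset (Fin n) → (Fin n → ℂ) → ℍ) (z : Fin n → ℂ) (h : Fin n)
    (K : Finset (Fin n)) : ℍ :=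
  J ^ #K * fderiv ℝ (F K) z (Pi.single h 1) +
    J ^ (#(K ∆ {h}) + 1) * fderiv ℝ (F (K ∆ {h})) z (Pi.single h Complex.I)

theorem stemDefect_eq_zero_iff (hJ : J * J = -1) {z : Fin n → ℂ} {h : Fin n}
    {K : Finset (Fin n)} (hK : h ∉ K) :
    stemDefect J F z h K = 0 ↔
      fderiv ℝ (F K) z (Pi.single h 1) = fderiv ℝ (F (insert h K)) z (Pi.single h Complex.I) := by
  have hJ0 : J ^ #K ≠ 0 := pow_ne_zero _ (left_ne_zero_of_mul (hJ.trans_ne (by norm_num)))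
  rw [stemDefect, symmDiff_singleton_of_notMem hK, card_insert_of_notMem hK, pow_succ, pow_succ,
    mul_assoc _ J J, hJ, mul_neg_one, neg_mul, ← sub_eq_add_neg, ← mul_sub, mul_eq_zero,
    or_iff_right hJ0, sub_eq_zero]

theorem stemDefect_insert_eq_zero_iff (hJ : J * J = -1) {z : Fin n → ℂ} {h : Fin n}
    {K : Finset (Fin n)} (hK : h ∉ K) :
    stemDefect J F z h (insert h K) = 0 ↔
      fderiv ℝ (F K) z (Pi.single h Complex.I) = -fderiv ℝ (F (insert h K)) z (Pi.single h 1) := by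
  have hJ0 : J ^ (#K + 1) ≠ 0 := pow_ne_zero _ (left_ne_zero_of_mul (hJ.trans_ne (by norm_num)))
  rw [stemDefect, ← symmDiff_singleton_of_notMem hK, symmDiff_symmDiff_cancel_right,
    symmDiff_singleton_of_notMem hK, card_insert_of_notMem hK, ← mul_add, mul_eq_zero,
    or_iff_right hJ0, add_comm, add_eq_zero_iff_eq_neg]

theorem stemHolo_iff_forall_stemDefect_eq_zero (hJ : J * J = -1) :
    StemHolo D F ↔ ∀ z ∈ D, ∀ h K, stemDefect J F z h K = 0 := by
  refine forall₂_congr fun z _ => forall_congr' fun h => ⟨fun hz K => ?_, fun hz K hK =>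
    ⟨(stemDefect_eq_zero_iff hJ hK).1 (hz K), (stemDefect_insert_eq_zero_iff hJ hK).1 (hz _)⟩⟩
  by_cases hK : h ∈ K
  · rw [← insert_erase hK]
    exact (stemDefect_insert_eq_zero_iff hJ (notMem_erase h K)).2 (hz _ (notMem_erase h K)).2
  · exact (stemDefect_eq_zero_iff hJ hK).2 (hz K hK).1

theorem dbar_restrictSlice_conjSet (hF : IsStem D F) (hinv : ConjInv D) (hC1 : StemC1 D F)
    (hD : IsOpen D) (E : Finset (Fin n)) {z : Fin n → ℂ} (hz : z ∈ D) (h : Fin n) :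
    dbar J (restrictSlice J F) (conjSet E z) h =
      ∑ K, (-1 : ℝ) ^ #(K ∩ E) • stemDefect J F z h K := by
  have hre : ∀ K, fderiv ℝ (F K) (conjSet E z) (Pi.single h 1) =
      (-1 : ℝ) ^ #(K ∩ E) • fderiv ℝ (F K) z (Pi.single h 1) := fun K => by
    rw [← hF.fderiv_conjSet hinv hC1 hD E K hz, conjSet_single, map_one, ite_self]
  have hI : (Pi.single h Complex.I : Fin n → ℂ) =
      (-1 : ℝ) ^ #({h} ∩ E) • conjSet E (Pi.single h Complex.I) := by
    by_cases hE : h ∈ E <;> simp [conjSet_single, hE, singleton_inter_of_mem,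
      singleton_inter_of_notMem, Pi.single_neg]
  have him : ∀ K, fderiv ℝ (F K) (conjSet E z) (Pi.single h Complex.I) =
      (-1 : ℝ) ^ #(K ∆ {h} ∩ E) • fderiv ℝ (F K) z (Pi.single h Complex.I) := fun K => by
    nth_rw 1 [hI]
    rw [map_smul, hF.fderiv_conjSet hinv hC1 hD E K hz, smul_smul,
      inter_symmDiff_distrib_right, neg_one_pow_card_symmDiff, mul_comm]
  simp only [dbar, (hasFDerivAt_restrictSlice fun K =>
      hC1.differentiableAt hD K (hinv.conjSet_mem E hz)).fderiv,
    _root_.sum_apply, _root_.smul_apply, hre, him, stemDefect,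
    smul_add, sum_add_distrib, mul_sum]
  congr 1
  · exact sum_congr rfl fun K _ => by rw [smul_eq_mul, mul_smul_comm]
  · refine Fintype.sum_bijective (· ∆ {h}) (symmDiff_left_involutive {h}).bijective _ _
      fun K => ?_
    rw [symmDiff_symmDiff_cancel_right, smul_eq_mul, mul_smul_comm, mul_smul_comm, ← mul_assoc,
      ← pow_succ']

theorem forall_stemDefect_eq_zero_iff_forall_dbar_eq_zero (hF : IsStem D F) (hinv : ConjInv D)
    (hC1 : StemC1 D F) (hD : IsOpen D) :
    (∀ z ∈ D, ∀ h K, stemDefect J F z h K = 0) ↔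
      ∀ z ∈ D, ∀ h, dbar J (restrictSlice J F) z h = 0 := by
  refine ⟨fun H z hz h => ?_, fun H z hz h =>
    eq_zero_of_forall_sum_neg_one_pow_card_inter_smul_eq_zero fun E => ?_⟩
  · simpa [H z hz h] using dbar_restrictSlice_conjSet (J := J) hF hinv hC1 hD ∅ hz h
  · rw [← dbar_restrictSlice_conjSet hF hinv hC1 hD E hz h]
    exact H _ (hinv.conjSet_mem E hz) h

end SliceRestriction

theorem stmt15_general (n : ℕ) (D : Set (Fin n → ℂ))
    (hinv : ConjInv D) (hD : IsOpen D)
    (F : Finset (Fin n) → (Fin n → ℂ) → ℍ) (hF : IsStem D F) (hC1 : StemC1 D F)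
    (f : (Fin n → ℍ) → ℍ) (hf : Induces D F f)
    (J J₁ : ℍ) (hJ : J ∈ Sph) (hJ₁ : J₁ ∈ Sph) (hanti : J * J₁ = -(J₁ * J))
    (f₀ f₁ : (Fin n → ℂ) → ℍ)
    (h₀ : ∀ z, f₀ z ∈ CJ J) (h₁ : ∀ z, f₁ z ∈ CJ J)
    (hdec : ∀ z ∈ D, f (phiJ J z) = f₀ z + f₁ z * J₁) :
    StemHolo D F ↔
      ∀ z ∈ D, ∀ h : Fin n,
        (fderiv ℝ f₀ z (Pi.single h 1) +
          J * fderiv ℝ f₀ z (Pi.single h Complex.I) = 0) ∧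
        (fderiv ℝ f₁ z (Pi.single h 1) +
          J * fderiv ℝ f₁ z (Pi.single h Complex.I) = 0) := by
  rw [stemHolo_iff_forall_stemDefect_eq_zero (mul_self_eq_neg_one_of_mem_Sph hJ),
    forall_stemDefect_eq_zero_iff_forall_dbar_eq_zero hF hinv hC1 hD]
  refine forall₂_congr fun z hz => forall_congr' fun h => ?_
  have hsplit : ∀ᶠ w in 𝓝 z, restrictSlice J F w = f₀ w + f₁ w * J₁ :=
    Filter.eventually_of_mem (hD.mem_nhds hz) fun w hw =>
      (hf.apply_phiJ hJ hw).symm.trans (hdec w hw)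
  have hdiff : DifferentiableAt ℝ (restrictSlice J F) z :=
    (hasFDerivAt_restrictSlice fun K => hC1.differentiableAt hD K hz).differentiableAt
  exact dbar_eq_zero_iff_of_eventually_eq_add_mul hJ hJ₁ hanti h₀ h₁ hsplit hdiff h

/-- **Splitting decomposition of slice regular functions.** -/
theorem stmt15 (n : ℕ) (hn : 0 < n) (D : Set (Fin n → ℂ)) (hne : D.Nonempty)
    (hinv : ConjInv D) (hD : IsOpen D)
    (F : Finset (Fin n) → (Fin n → ℂ) → ℍ) (hF : IsStem D F) (hC1 : StemC1 D F)
    (f : (Fin n → ℍ) → ℍ) (hf : Induces D F f)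
    (J J₁ : ℍ) (hJ : J ∈ Sph) (hJ₁ : J₁ ∈ Sph) (hanti : J * J₁ = -(J₁ * J))
    (f₀ f₁ : (Fin n → ℂ) → ℍ)
    (h₀ : ∀ z, f₀ z ∈ CJ J) (h₁ : ∀ z, f₁ z ∈ CJ J)
    (hdec : ∀ z ∈ D, f (phiJ J z) = f₀ z + f₁ z * J₁) :
    StemHolo D F ↔
      ∀ z ∈ D, ∀ h : Fin n,
        (fderiv ℝ f₀ z (Pi.single h 1) +
          J * fderiv ℝ f₀ z (Pi.single h Complex.I) = 0) ∧
        (fderiv ℝ f₁ z (Pi.single h 1) +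
          J * fderiv ℝ f₁ z (Pi.single h Complex.I) = 0) :=
  stmt15_general n D hinv hD F hF hC1 f hf J J₁ hJ hJ₁ hanti f₀ f₁ h₀ h₁ hdec
end
end

section
/- Let D be open in ℂⁿ. For all ℓ, m ∈ ℕⁿ and a, b ∈ ℍ, the slice tensor product of the monomial slice functions x ↦ x^ℓa and x ↦ x^mb on Ω_D is the monomial slice function x ↦ x^{ℓ+m}(ab). Consequently, for polynomial functions s(x) = ∑_{p∈P} x^p a_p and t(x) = ∑_{q∈Q} x^q b_q on Ω_D (P, Q ⊆ ℕⁿ finite), the slice tensor product satisfies s⊙t = ∑_{p∈P, q∈Q} x^{p+q}(a_p b_q), i.e. the slice tensor product of polynomials coincides with their star product. -/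
/-!
At the points `ptOf α β J` with every `J h = ±i`, the product `J_K` equals `σ_⊗(K, S) i^{|K|}`,
where `S` is the set of indices with `J h = -i`; since the Walsh characters `S ↦ σ_⊗(K, S)`
separate the subsets `K`, a stem function is determined at `z` by the values of its slice
function at these `2ⁿ` points. There all coordinates lie in the commutative slice `ℂ_i`, so
`J_H J_L = σ_⊗(H, L) J_{H △ L}` and `x^ℓ x^m = x^{ℓ+m}`. The stem function of `x^ℓ a` is
`c_K(ℓ) a` with real coefficients `c_K(ℓ)`, and the two facts give `c(ℓ) Δ c(m) = c(ℓ + m)` for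
the `Δ`-product with sign `σ_⊗`; hence the tensor product of the stems of `x^ℓ a` and `x^m b`
is the stem of `x^{ℓ+m} ab`. Polynomials follow by bilinearity.
-/

noncomputable section

variable {n : ℕ}

open Finset Complex

def quatI : ℍ := ⟨0, 1, 0, 0⟩

theorem quatI_mul_self : quatI * quatI = -1 := by
  ext <;> simp only [Quaternion.re_mul, Quaternion.imI_mul, Quaternion.imJ_mul,
    Quaternion.imK_mul] <;> simp [quatI, Quaternion.re_one, Quaternion.imI_one,
      Quaternion.imJ_one, Quaternion.imK_one]

theorem quatI_ne_zero : quatI ≠ 0 := fun h => by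
  simpa [quatI, Quaternion.imI_zero] using congrArg QuaternionAlgebra.imI h

def cplxToQuat : ℂ →ₐ[ℝ] ℍ := Complex.lift ⟨quatI, quatI_mul_self⟩

theorem cplxToQuat_I : cplxToQuat I = quatI := Complex.liftAux_apply_I _ quatI_mul_self

theorem prod_mul_prod_eq_pow_mul_prod_symmDiff {ι R : Type*} [DecidableEq ι] [CommMonoid R]
    {w : ι → R} {c : R} (hw : ∀ i, w i * w i = c) (H L : Finset ι) :
    (∏ i ∈ H, w i) * ∏ i ∈ L, w i = c ^ #(H ∩ L) * ∏ i ∈ symmDiff H L, w i := by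
  rw [← prod_union_inter, ← sup_eq_union, ← symmDiff_sup_inf, sup_eq_union, inf_eq_inter,
    prod_union (by exact disjoint_symmDiff_inf H L), ← prod_const, ← prod_congr rfl fun i _ => hw i,
    prod_mul_distrib, mul_assoc, mul_comm]

theorem JK_insert_of_lt {J : Fin n → ℍ} {a : Fin n} {s : Finset (Fin n)} (ha : ∀ x ∈ s, a < x) :
    JK J (insert a s) = J a * JK J s := by
  rw [JK, sort_insert _ (fun x hx => (ha x hx).le) fun h => lt_irrefl a (ha a h)]
  rfl

theorem JK_map {R F : Type*} [CommSemiring R] [FunLike F R ℍ] [RingHomClass F R ℍ] (f : F)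
    (w : Fin n → R) (K : Finset (Fin n)) : JK (fun h => f (w h)) K = f (∏ h ∈ K, w h) := by
  induction K using Finset.induction_on_min with
  | empty => simp [JK]
  | insert a s ha ih =>
    rw [JK_insert_of_lt ha, ih, prod_insert fun h => lt_irrefl a (ha a h), map_mul]

theorem JK_add_smul (c d : Fin n → ℝ) (J : Fin n → ℍ) (s : Finset (Fin n)) :
    JK (fun h => (c h : ℍ) + d h • J h) s =
      ∑ t ∈ s.powerset, ((∏ h ∈ s \ t, c h) * ∏ h ∈ t, d h) • JK J t := by
  induction s using Finset.induction_on_min with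
  | empty => simp [JK]
  | insert a s ha ih =>
    have has : a ∉ s := fun h => lt_irrefl a (ha a h)
    rw [JK_insert_of_lt ha, ih, sum_powerset_insert has, add_mul, mul_sum, mul_sum]
    congr 1
    · refine sum_congr rfl fun t ht => ?_
      rw [insert_sdiff_of_notMem _ fun h => has (mem_powerset.1 ht h),
        prod_insert fun h => has (mem_sdiff.1 h).1, Quaternion.coe_mul_eq_smul, smul_smul,
        mul_assoc]
    · refine sum_congr rfl fun t ht => ?_
      have hat : a ∉ t := fun h => has (mem_powerset.1 ht h)
      rw [insert_sdiff_insert, sdiff_insert_of_notMem has, prod_insert hat,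
        JK_insert_of_lt fun x hx => ha x (mem_powerset.1 ht hx), smul_mul_assoc, mul_smul_comm,
        smul_smul, mul_left_comm]

def signI (S : Finset (Fin n)) (h : Fin n) : ℂ := if h ∈ S then -I else I

def signUnit (S : Finset (Fin n)) : Fin n → ℍ := fun h => cplxToQuat (signI S h)

theorem signI_mul_self (S : Finset (Fin n)) (h : Fin n) : signI S h * signI S h = -1 := by
  unfold signI; split_ifs <;> simp

theorem signUnit_mem_Sph (S : Finset (Fin n)) (h : Fin n) : signUnit S h ∈ Sph := by
  show cplxToQuat _ ^ 2 = -1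
  rw [← map_pow, sq, signI_mul_self, map_neg, map_one]

theorem sigmaT_eq_prod (K S : Finset (Fin n)) :
    sigmaT K S = ∏ h ∈ K, if h ∈ S then -1 else 1 := by
  rw [sigmaT, prod_ite_mem, prod_const]

theorem JK_signUnit (S K : Finset (Fin n)) : JK (signUnit S) K = sigmaT K S • quatI ^ #K := by
  have hsign : ∀ h, signI S h = ((if h ∈ S then -1 else 1 : ℝ) : ℂ) * I := fun h => by
    unfold signI; split_ifs <;> simp
  unfold signUnit
  rw [JK_map cplxToQuat (signI S), prod_congr rfl fun h _ => hsign h,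
    prod_mul_distrib, prod_const, ← ofReal_prod, ← sigmaT_eq_prod, map_mul,
    AlgHom.map_coe_real_complex, map_pow, cplxToQuat_I, Quaternion.algebraMap_def,
    Quaternion.coe_mul_eq_smul]

theorem JK_signUnit_mul (S H L : Finset (Fin n)) :
    JK (signUnit S) H * JK (signUnit S) L = sigmaT H L • JK (signUnit S) (symmDiff H L) := by
  unfold signUnit
  simp only [JK_map cplxToQuat (signI S)]
  rw [← map_mul, prod_mul_prod_eq_pow_mul_prod_symmDiff (signI_mul_self S), sigmaT,
    Algebra.smul_def, map_pow, map_neg, map_one, map_mul, map_pow, map_neg, map_one]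

theorem sigmaT_mul_sigmaT (H L S : Finset (Fin n)) :
    sigmaT H S * sigmaT L S = sigmaT (symmDiff H L) S := by
  simp only [sigmaT_eq_prod]
  rw [prod_mul_prod_eq_pow_mul_prod_symmDiff (c := 1) (fun h => by split_ifs <;> norm_num),
    one_pow, one_mul]

theorem sum_sigmaT (K : Finset (Fin n)) :
    ∑ S, sigmaT K S = if K = ∅ then 2 ^ n else 0 := by
  have hprod : ∀ S, sigmaT K S = ∏ h ∈ S, if h ∈ K then -1 else 1 := fun S => by
    rw [sigmaT, inter_comm, ← sigmaT, sigmaT_eq_prod]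
  simp only [hprod]
  rw [← powerset_univ, ← prod_one_add]
  split_ifs with hK
  · simp [hK, one_add_one_eq_two]
  · obtain ⟨h, hh⟩ := nonempty_iff_ne_empty.2 hK
    exact prod_eq_zero (mem_univ h) (by simp [hh])

theorem eq_zero_of_forall_sum_sigmaT_smul_eq_zero {V : Type*} [AddCommGroup V] [Module ℝ V]
    {T : Finset (Fin n) → V} (hT : ∀ S, ∑ K, sigmaT K S • T K = 0) (K₀ : Finset (Fin n)) :
    T K₀ = 0 := by
  have h : ∑ S, sigmaT K₀ S • ∑ K, sigmaT K S • T K = (2 : ℝ) ^ n • T K₀ := by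
    simp only [smul_sum, smul_smul, sigmaT_mul_sigmaT]
    rw [sum_comm]
    simp only [← sum_smul, sum_sigmaT, ← bot_eq_empty, symmDiff_eq_bot, ite_smul, zero_smul,
      sum_ite_eq, mem_univ, if_true]
  simpa [hT] using h.symm

theorem eq_of_forall_sum_JK_signUnit_mul_eq {T T' : Finset (Fin n) → ℍ}
    (h : ∀ S, ∑ K, JK (signUnit S) K * T K = ∑ K, JK (signUnit S) K * T' K) : T = T' := by
  funext K
  have hzero := eq_zero_of_forall_sum_sigmaT_smul_eq_zero
    (T := fun K => quatI ^ #K * (T K - T' K)) (fun S => by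
      simp_rw [← smul_mul_assoc, ← JK_signUnit, mul_sub, sum_sub_distrib, h S, sub_self]) K
  rw [mul_eq_zero, sub_eq_zero] at hzero
  exact hzero.resolve_left (pow_ne_zero _ quatI_ne_zero)

theorem eq_of_forall_sum_smul_JK_signUnit_eq {v w : Finset (Fin n) → ℝ}
    (h : ∀ S, ∑ K, v K • JK (signUnit S) K = ∑ K, w K • JK (signUnit S) K) : v = w := by
  funext K
  refine Quaternion.coe_injective (congrFun (eq_of_forall_sum_JK_signUnit_mul_eq
    (T := fun K => (v K : ℍ)) (T' := fun K => (w K : ℍ)) fun S => ?_) K)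
  simpa only [Quaternion.mul_coe_eq_smul] using h S

theorem zOf_re_im (z : Fin n → ℂ) : zOf (fun h => (z h).re) (fun h => (z h).im) = z :=
  funext fun h => re_add_im (z h)

theorem Induces.apply_eq {D : Set (Fin n → ℂ)} {F G : Finset (Fin n) → (Fin n → ℂ) → ℍ}
    {f : (Fin n → ℍ) → ℍ} (hF : Induces D F f) (hG : Induces D G f) {z : Fin n → ℂ}
    (hz : z ∈ D) (K : Finset (Fin n)) : F K z = G K z := by
  rw [← zOf_re_im z] at hz ⊢
  exact congrFun (eq_of_forall_sum_JK_signUnit_mul_eq fun S =>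
    (hF _ _ _ (signUnit_mem_Sph S) hz).symm.trans (hG _ _ _ (signUnit_mem_Sph S) hz)) K

-- The coefficient of `J_K` in `x^ℓ` at `x = ptOf α β J`, obtained by expanding the ordered
-- product of the factors `x_h^{ℓ_h} = Re(z_h^{ℓ_h}) + Im(z_h^{ℓ_h}) J_h`.
def monoCoeff (ℓ : Fin n → ℕ) (z : Fin n → ℂ) (K : Finset (Fin n)) : ℝ :=
  (∏ h ∈ Kᶜ, (z h ^ ℓ h).re) * ∏ h ∈ K, (z h ^ ℓ h).im

def monoStem (ℓ : Fin n → ℕ) (a : ℍ) : Finset (Fin n) → (Fin n → ℂ) → ℍ :=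
  fun K z => monoCoeff ℓ z K • a

theorem mono_eq_JK (ℓ : Fin n → ℕ) (a : ℍ) (x : Fin n → ℍ) :
    mono ℓ a x = JK (fun h => x h ^ ℓ h) univ * a := by
  rw [mono, JK, Fin.sort_univ, List.ofFn_eq_map]

theorem ptOf_pow {α β : Fin n → ℝ} {J : Fin n → ℍ} {h : Fin n} (hJ : J h ∈ Sph) (k : ℕ) :
    ptOf α β J h ^ k = ((zOf α β h ^ k).re : ℍ) + (zOf α β h ^ k).im • J h := by
  have hJJ : J h * J h = -1 := by rw [← sq]; exact hJ
  have hpt : ptOf α β J h = Complex.liftAux (J h) hJJ (zOf α β h) := by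
    simp [ptOf, zOf, Complex.liftAux_apply, Quaternion.coe_mul_eq_smul]
  rw [hpt, ← map_pow, Complex.liftAux_apply, Quaternion.algebraMap_def]

theorem mono_ptOf (ℓ : Fin n → ℕ) (a : ℍ) (α β : Fin n → ℝ) {J : Fin n → ℍ}
    (hJ : ∀ h, J h ∈ Sph) :
    mono ℓ a (ptOf α β J) = (∑ K, monoCoeff ℓ (zOf α β) K • JK J K) * a := by
  simp only [mono_eq_JK, ptOf_pow (hJ _), JK_add_smul, powerset_univ, monoCoeff,
    compl_eq_univ_sdiff]

theorem monoStem_induces (D : Set (Fin n → ℂ)) (ℓ : Fin n → ℕ) (a : ℍ) :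
    Induces D (monoStem ℓ a) (mono ℓ a) := fun α β J hJ _ => by
  rw [mono_ptOf ℓ a α β hJ, sum_mul]
  simp only [monoStem, smul_mul_assoc, mul_smul_comm]

theorem mono_map {R F : Type*} [CommSemiring R] [FunLike F R ℍ] [RingHomClass F R ℍ] (f : F)
    (ℓ : Fin n → ℕ) (a : ℍ) (w : Fin n → R) :
    mono ℓ a (fun h => f (w h)) = f (∏ h, w h ^ ℓ h) * a := by
  simp only [mono_eq_JK, ← map_pow, JK_map]

theorem ptOf_signUnit (α β : Fin n → ℝ) (S : Finset (Fin n)) :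
    ptOf α β (signUnit S) = fun h => cplxToQuat (α h + β h * signI S h) := by
  funext h
  simp [ptOf, signUnit]

theorem SPT_smul_smul (r s : Finset (Fin n) → (Fin n → ℂ) → ℝ) (a b : ℍ)
    (K : Finset (Fin n)) (z : Fin n → ℂ) :
    SPT (fun H w => r H w • a) (fun L w => s L w • b) K z =
      deltaMulR sigmaT (fun H => r H z) (fun L => s L z) K • (a * b) := by
  simp only [SPT, SP, deltaMulR, sum_smul, ite_smul, zero_smul, smul_mul_smul_comm, smul_smul,
    mul_assoc]

theorem sum_smul_JK_signUnit_deltaMulR (S : Finset (Fin n)) (v w : Finset (Fin n) → ℝ) :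
    ∑ K, deltaMulR sigmaT v w K • JK (signUnit S) K =
      (∑ H, v H • JK (signUnit S) H) * ∑ L, w L • JK (signUnit S) L := by
  simp only [deltaMulR, sum_smul, ite_smul, zero_smul, sum_mul_sum, smul_mul_smul_comm,
    JK_signUnit_mul, smul_smul]
  rw [sum_comm]
  refine sum_congr rfl fun H _ => ?_
  rw [sum_comm]
  refine sum_congr rfl fun L _ => ?_
  rw [sum_ite_eq, if_pos (mem_univ _), mul_assoc, mul_comm]

theorem deltaMulR_monoCoeff (ℓ m : Fin n → ℕ) (z : Fin n → ℂ) :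
    deltaMulR sigmaT (monoCoeff ℓ z) (monoCoeff m z) = monoCoeff (ℓ + m) z := by
  obtain ⟨α, β, rfl⟩ : ∃ α β, zOf α β = z := ⟨_, _, zOf_re_im z⟩
  have key : ∀ S, ∑ K, deltaMulR sigmaT (monoCoeff ℓ (zOf α β)) (monoCoeff m (zOf α β)) K •
      JK (signUnit S) K = ∑ K, monoCoeff (ℓ + m) (zOf α β) K • JK (signUnit S) K := fun S => by
    have hJ := signUnit_mem_Sph S
    calc _ = mono ℓ 1 (ptOf α β (signUnit S)) * mono m 1 (ptOf α β (signUnit S)) := by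
          rw [sum_smul_JK_signUnit_deltaMulR, mono_ptOf _ _ _ _ hJ, mono_ptOf _ _ _ _ hJ,
            mul_one, mul_one]
      _ = mono (ℓ + m) 1 (ptOf α β (signUnit S)) := by
          simp only [ptOf_signUnit, mono_map, mul_one, ← map_mul, ← prod_mul_distrib, ← pow_add,
            Pi.add_apply]
      _ = _ := by rw [mono_ptOf _ _ _ _ hJ, mul_one]
  exact eq_of_forall_sum_smul_JK_signUnit_eq key

theorem SPT_monoStem (ℓ m : Fin n → ℕ) (a b : ℍ) :
    SPT (monoStem ℓ a) (monoStem m b) = monoStem (ℓ + m) (a * b) := by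
  funext K z
  unfold monoStem
  rw [SPT_smul_smul, deltaMulR_monoCoeff]

theorem SPT_sum_sum {ι κ : Type*} (P : Finset ι) (Q : Finset κ)
    (F : ι → Finset (Fin n) → (Fin n → ℂ) → ℍ) (G : κ → Finset (Fin n) → (Fin n → ℂ) → ℍ) :
    SPT (fun K z => ∑ p ∈ P, F p K z) (fun K z => ∑ q ∈ Q, G q K z) =
      fun K z => ∑ p ∈ P, ∑ q ∈ Q, SPT (F p) (G q) K z := by
  funext K z
  simp only [SPT, SP, sum_mul_sum, smul_sum, ite_sum_zero]
  simp_rw [← sum_product' (univ : Finset (Finset (Fin n))) univ]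
  rw [sum_comm]
  exact sum_congr rfl fun p _ => sum_comm

theorem induces_sum {ι : Type*} {D : Set (Fin n → ℂ)} (P : Finset ι)
    {F : ι → Finset (Fin n) → (Fin n → ℂ) → ℍ} {f : ι → (Fin n → ℍ) → ℍ}
    (hF : ∀ p ∈ P, Induces D (F p) (f p)) :
    Induces D (fun K z => ∑ p ∈ P, F p K z) (fun x => ∑ p ∈ P, f p x) := fun α β J hJ hz => by
  simp only [sum_congr rfl fun p hp => hF p hp α β J hJ hz, mul_sum]
  exact sum_comm

theorem Induces.SPT_congr {D : Set (Fin n → ℂ)} {F F₀ G G₀ : Finset (Fin n) → (Fin n → ℂ) → ℍ}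
    {f g k : (Fin n → ℍ) → ℍ} (hF : Induces D F f) (hF₀ : Induces D F₀ f)
    (hG : Induces D G g) (hG₀ : Induces D G₀ g) (h₀ : Induces D (SPT F₀ G₀) k) :
    Induces D (SPT F G) k := fun α β J hJ hz => by
  simp only [h₀ α β J hJ hz, SPT, SP, hF.apply_eq hF₀ hz, hG.apply_eq hG₀ hz]

theorem stmt18_general (n : ℕ) (D : Set (Fin n → ℂ)) :
    (∀ (ℓ m : Fin n → ℕ) (a b : ℍ) (F G : Finset (Fin n) → (Fin n → ℂ) → ℍ),
      IsStem D F → Induces D F (mono ℓ a) →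
      IsStem D G → Induces D G (mono m b) →
      Induces D (SPT F G) (mono (ℓ + m) (a * b))) ∧
    (∀ (P Q : Finset (Fin n → ℕ)) (a b : (Fin n → ℕ) → ℍ)
        (F G : Finset (Fin n) → (Fin n → ℂ) → ℍ),
      IsStem D F → Induces D F (fun x => ∑ p ∈ P, mono p (a p) x) →
      IsStem D G → Induces D G (fun x => ∑ q ∈ Q, mono q (b q) x) →
      Induces D (SPT F G) (fun x => ∑ p ∈ P, ∑ q ∈ Q, mono (p + q) (a p * b q) x)) := by
  refine ⟨fun ℓ m a b F G _ hF _ hG => ?_, fun P Q a b F G _ hF _ hG => ?_⟩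
  · refine hF.SPT_congr (monoStem_induces D ℓ a) hG (monoStem_induces D m b) ?_
    rw [SPT_monoStem]
    exact monoStem_induces D (ℓ + m) (a * b)
  · have hpoly : ∀ (P : Finset (Fin n → ℕ)) (a : (Fin n → ℕ) → ℍ),
        Induces D (fun K z => ∑ p ∈ P, monoStem p (a p) K z)
          (fun x => ∑ p ∈ P, mono p (a p) x) :=
      fun P a => induces_sum P fun p _ => monoStem_induces D p (a p)
    refine hF.SPT_congr (hpoly P a) hG (hpoly Q b) ?_
    rw [SPT_sum_sum]
    simp only [SPT_monoStem]
    exact induces_sum P fun p _ => induces_sum Q fun q _ => monoStem_induces D (p + q) _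

/-- The slice tensor product of monomials (and hence of
polynomials) coincides with their star product. -/
theorem stmt18 (n : ℕ) (hn : 0 < n) (D : Set (Fin n → ℂ)) (hne : D.Nonempty)
    (hinv : ConjInv D) (hD : IsOpen D) :
    (∀ (ℓ m : Fin n → ℕ) (a b : ℍ) (F G : Finset (Fin n) → (Fin n → ℂ) → ℍ),
      IsStem D F → Induces D F (mono ℓ a) →
      IsStem D G → Induces D G (mono m b) →
      Induces D (SPT F G) (mono (ℓ + m) (a * b))) ∧
    (∀ (P Q : Finset (Fin n → ℕ)) (a b : (Fin n → ℕ) → ℍ)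
        (F G : Finset (Fin n) → (Fin n → ℂ) → ℍ),
      IsStem D F → Induces D F (fun x => ∑ p ∈ P, mono p (a p) x) →
      IsStem D G → Induces D G (fun x => ∑ q ∈ Q, mono q (b q) x) →
      Induces D (SPT F G) (fun x => ∑ p ∈ P, ∑ q ∈ Q, mono (p + q) (a p * b q) x)) :=
  stmt18_general n D
end
end

section
/- Let f : ℍⁿ → ℍ be a polynomial function, f(x) = ∑_{ℓ∈L} x^ℓ a_ℓ for a finite set L ⊆ ℕⁿ and coefficients a_ℓ ∈ ℍ, and assume f is not a constant function. Then the zero set V(f) = {x ∈ ℍⁿ : f(x) = 0} is nonempty. -/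
noncomputable section

variable {n : ℕ}

/-!
On the real line `x = t q` through `t ∈ ℝⁿ` in a quaternionic direction `q`, real scalars commute
with `q`, so `f (t q) = ∑ₘ qᵐ bₘ(t)`, where `bₘ(t)` is the degree-`m` homogeneous part of `f`
evaluated at `t`; for generic `t` some `bₘ(t)` with `m ≥ 1` is nonzero.

For one variable, on the slice `q = α + β J` over `z = α + i β` one has
`∑ qᵐ cₘ = F₁(z) + J F₂(z)` with `F₁(z) = ∑ Re(zᵐ) cₘ` and `F₂(z) = ∑ Im(zᵐ) cₘ`. If
`‖F₁(z)‖ = ‖F₂(z)‖` and `F₁(z) ⊥ F₂(z)`, then `J = -F₁(z) F₂(z)⁻¹` is an imaginary unit and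
`F₁(z) + J F₂(z) = 0`. In real coordinates `F₁ + i F₂ = (pᵢ(z))ᵢ` with real polynomials `pᵢ`, and
the two conditions say `∑ pᵢ(z)² = 0`; the polynomial `∑ pᵢ²` is nonconstant, so it has a
complex root.
-/

open Finset

section OneVariable

open Polynomial Filter

theorem Polynomial.degree_sum_sq_pos {ι : Type*} {s : Finset ι} {p : ι → ℝ[X]} {i : ι}
    (hi : i ∈ s) (hp : 0 < (p i).degree) : 0 < (∑ j ∈ s, p j ^ 2).degree := by
  refine (abs_tendsto_atTop_iff _).1 <| tendsto_atTop_mono (fun x => ?_)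
    ((tendsto_pow_atTop two_ne_zero).comp (abs_tendsto_atTop _ hp))
  simp only [Function.comp_apply, sq_abs, eval_finsetSum, eval_pow]
  exact (single_le_sum (fun j _ => sq_nonneg (eval x (p j))) hi).trans (le_abs_self _)

section Stem

variable {V : Type*} [AddCommMonoid V] [Module ℝ V]

/-- With `stemIm`, the stem function `F₁ + i F₂` of the polynomial `q ↦ ∑ m ∈ s, qᵐ cₘ`. -/
def stemRe (s : Finset ℕ) (c : ℕ → V) (z : ℂ) : V := ∑ m ∈ s, (z ^ m).re • c m

def stemIm (s : Finset ℕ) (c : ℕ → V) (z : ℂ) : V := ∑ m ∈ s, (z ^ m).im • c m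

end Stem

theorem sum_pow_mul_liftAux {A : Type*} [Ring A] [Algebra ℝ A] (J : A) (hJ : J * J = -1)
    (s : Finset ℕ) (c : ℕ → A) (z : ℂ) :
    ∑ m ∈ s, Complex.liftAux J hJ z ^ m * c m = stemRe s c z + J * stemIm s c z := by
  simp only [← map_pow]
  simp only [Complex.liftAux_apply, Algebra.algebraMap_eq_smul_one, add_mul, smul_mul_assoc,
    one_mul, mul_smul_comm, sum_add_distrib, mul_sum, stemRe, stemIm]

variable {V : Type*} [NormedAddCommGroup V] [InnerProductSpace ℝ V]

theorem aeval_sum_inner_C_mul_X_pow (s : Finset ℕ) (c : ℕ → V) (v : V) (z : ℂ) :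
    aeval z (∑ m ∈ s, C (inner ℝ v (c m)) * X ^ m) =
      ⟨inner ℝ v (stemRe s c z), inner ℝ v (stemIm s c z)⟩ := by
  apply Complex.ext <;>
    simp only [map_sum, map_mul, aeval_C, map_pow, aeval_X, Complex.re_sum, Complex.im_sum,
      Complex.coe_algebraMap, Complex.re_ofReal_mul, Complex.im_ofReal_mul, stemRe, stemIm,
      inner_sum, real_inner_smul_right] <;>
    exact sum_congr rfl fun m _ => mul_comm _ _

theorem exists_norm_stemRe_eq_and_inner_eq_zero [FiniteDimensional ℝ V] {s : Finset ℕ}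
    {c : ℕ → V} {m₀ : ℕ} (hm₀ : m₀ ∈ s) (hpos : 0 < m₀) (hc : c m₀ ≠ 0) :
    ∃ z : ℂ, ‖stemRe s c z‖ = ‖stemIm s c z‖ ∧ inner ℝ (stemRe s c z) (stemIm s c z) = 0 := by
  let b := stdOrthonormalBasis ℝ V
  let p i : ℝ[X] := ∑ m ∈ s, C (inner ℝ (b i) (c m)) * X ^ m
  obtain ⟨i, hi⟩ : ∃ i, inner ℝ (b i) (c m₀) ≠ 0 := by
    by_contra! h
    exact hc (by rw [← b.sum_repr' (c m₀)]; simp [h])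
  have hcoeff : (p i).coeff m₀ ≠ 0 := by
    simpa [p, finsetSum_coeff, coeff_C_mul_X_pow, hm₀] using hi
  have hdeg : 0 < ((∑ i, p i ^ 2).map (algebraMap ℝ ℂ)).degree := by
    rw [degree_map]
    exact degree_sum_sq_pos (mem_univ i)
      ((WithBot.coe_pos.2 hpos).trans_le (le_degree_of_ne_zero hcoeff))
  obtain ⟨z, hz⟩ := Complex.exists_root hdeg
  refine ⟨z, ?_⟩
  have hsum : ∑ i, aeval z (p i) ^ 2 = 0 := by
    simpa only [IsRoot, eval_map_algebraMap, map_sum, map_pow] using hz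
  simp only [p, aeval_sum_inner_C_mul_X_pow] at hsum
  have hre := congrArg Complex.re hsum
  have him := congrArg Complex.im hsum
  simp only [Complex.re_sum, Complex.im_sum, sq, Complex.mul_re, Complex.mul_im, Complex.zero_re,
    Complex.zero_im, sum_sub_distrib, sub_eq_zero] at hre him
  have hinner (u w : V) : inner ℝ u w = ∑ i, inner ℝ (b i) u * inner ℝ (b i) w := by
    simp only [← b.sum_inner_mul_inner u w, real_inner_comm u]
  constructor
  · rw [← sq_eq_sq₀ (norm_nonneg _) (norm_nonneg _), ← real_inner_self_eq_norm_sq,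
      ← real_inner_self_eq_norm_sq, hinner, hinner, hre]
  · rw [hinner]
    simpa [mul_comm, ← two_mul, ← mul_sum] using him

theorem Quaternion.mul_self_eq_neg_one {u : ℍ} (hre : u.re = 0) (hnormSq : normSq u = 1) :
    u * u = -1 := by
  rw [← sq, Quaternion.sq_eq_neg_normSq.2 hre, hnormSq, Quaternion.coe_one]

theorem Quaternion.exists_mul_self_eq_neg_one_add_mul_eq_zero {A B : ℍ} (hnorm : ‖A‖ = ‖B‖)
    (hinner : inner ℝ A B = 0) : ∃ J : ℍ, J * J = -1 ∧ A + J * B = 0 := by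
  rcases eq_or_ne B 0 with rfl | hB
  · refine ⟨(Complex.I : ℍ), mul_self_eq_neg_one (by simp) (by simp [normSq_def']), ?_⟩
    simpa using hnorm
  refine ⟨-(A * B⁻¹), ?_, by rw [neg_mul, mul_assoc, inv_mul_cancel₀ hB, mul_one, add_neg_cancel]⟩
  have hre : (A * B⁻¹).re = 0 := by
    rw [inv_def, mul_smul_comm, re_smul, ← inner_def, hinner, smul_zero]
  have hnormSq : normSq (A * B⁻¹) = 1 := by
    rw [map_mul, map_inv₀, normSq_eq_norm_mul_self, normSq_eq_norm_mul_self, hnorm,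
      mul_inv_cancel₀ (by simpa using hB)]
  rw [neg_mul_neg, mul_self_eq_neg_one hre hnormSq]

theorem Quaternion.exists_sum_pow_mul_eq_zero {s : Finset ℕ} {c : ℕ → ℍ} {m₀ : ℕ} (hm₀ : m₀ ∈ s)
    (hpos : 0 < m₀) (hc : c m₀ ≠ 0) : ∃ q : ℍ, ∑ m ∈ s, q ^ m * c m = 0 := by
  obtain ⟨z, hnorm, hinner⟩ := exists_norm_stemRe_eq_and_inner_eq_zero hm₀ hpos hc
  obtain ⟨J, hJ, hzero⟩ := exists_mul_self_eq_neg_one_add_mul_eq_zero hnorm hinner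
  exact ⟨Complex.liftAux J hJ z, by rw [sum_pow_mul_liftAux, hzero]⟩

end OneVariable

theorem eq_zero_of_forall_sum_prod_pow_smul_eq_zero {K V ι : Type*} [Field K] [Infinite K]
    [AddCommGroup V] [Module K V] [Fintype ι] {S : Finset (ι → ℕ)} {a : (ι → ℕ) → V}
    (h : ∀ t : ι → K, ∑ ℓ ∈ S, (∏ i, t i ^ ℓ i) • a ℓ = 0) {ℓ₀ : ι → ℕ} (hℓ₀ : ℓ₀ ∈ S) :
    a ℓ₀ = 0 := by
  classical
  refine (Module.forall_dual_apply_eq_zero_iff K (a ℓ₀)).1 fun φ => ?_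
  let p : MvPolynomial ι K :=
    ∑ ℓ ∈ S, MvPolynomial.monomial (Finsupp.equivFunOnFinite.symm ℓ) (φ (a ℓ))
  have hp : p = 0 := MvPolynomial.funext fun t => by
    simpa [p, MvPolynomial.eval_monomial, Finsupp.prod_pow, mul_comm] using congrArg φ (h t)
  simpa [p, MvPolynomial.coeff_sum, MvPolynomial.coeff_monomial, hℓ₀] using
    congrArg (MvPolynomial.coeff (Finsupp.equivFunOnFinite.symm ℓ₀)) hp

theorem prod_ofFn_smul_pow {R A : Type*} [CommSemiring R] [Semiring A] [Algebra R A]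
    (r : Fin n → R) (e : Fin n → ℕ) (q : A) :
    (List.ofFn fun i => r i • q ^ e i).prod = (∏ i, r i) • q ^ ∑ i, e i := by
  induction n with
  | zero => simp
  | succ n ih =>
    rw [List.ofFn_succ, List.prod_cons, ih, Fin.prod_univ_succ, Fin.sum_univ_succ,
      smul_mul_smul_comm, pow_add]

theorem mono_smul (ℓ : Fin n → ℕ) (a : ℍ) (t : Fin n → ℝ) (q : ℍ) :
    mono ℓ a (fun h => t h • q) = q ^ (∑ h, ℓ h) * ((∏ h, t h ^ ℓ h) • a) := by
  simp only [mono, smul_pow, prod_ofFn_smul_pow, smul_mul_assoc, mul_smul_comm]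

def homogPartEval (L : Finset (Fin n → ℕ)) (a : (Fin n → ℕ) → ℍ) (m : ℕ) (t : Fin n → ℝ) : ℍ :=
  ∑ ℓ ∈ L with ∑ h, ℓ h = m, (∏ h, t h ^ ℓ h) • a ℓ

theorem sum_mono_smul (L : Finset (Fin n → ℕ)) (a : (Fin n → ℕ) → ℍ) (t : Fin n → ℝ) (q : ℍ) :
    ∑ ℓ ∈ L, mono ℓ (a ℓ) (fun h => t h • q) =
      ∑ m ∈ L.image (fun ℓ => ∑ h, ℓ h), q ^ m * homogPartEval L a m t := by
  rw [← sum_fiberwise_of_maps_to (fun ℓ hℓ => mem_image_of_mem (fun ℓ => ∑ h, ℓ h) hℓ)]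
  refine sum_congr rfl fun m _ => ?_
  rw [homogPartEval, mul_sum]
  exact sum_congr rfl fun ℓ hℓ => by rw [mono_smul, (mem_filter.1 hℓ).2]

theorem exists_mem_ne_zero_and_coeff_ne_zero {L : Finset (Fin n → ℕ)} {a : (Fin n → ℕ) → ℍ}
    (hnc : ¬ ∃ c : ℍ, ∀ x, ∑ ℓ ∈ L, mono ℓ (a ℓ) x = c) : ∃ ℓ ∈ L, ℓ ≠ 0 ∧ a ℓ ≠ 0 := by
  contrapose! hnc
  refine ⟨∑ ℓ ∈ L, mono ℓ (a ℓ) 0, fun x => sum_congr rfl fun ℓ hℓ => ?_⟩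
  rcases eq_or_ne ℓ 0 with rfl | hℓ0
  · simp [mono]
  · simp [mono, hnc ℓ hℓ hℓ0]

theorem stmt19_general (n : ℕ) (L : Finset (Fin n → ℕ)) (a : (Fin n → ℕ) → ℍ)
    (f : (Fin n → ℍ) → ℍ) (hf : ∀ x, f x = ∑ ℓ ∈ L, mono ℓ (a ℓ) x)
    (hnc : ¬ ∃ c : ℍ, ∀ x, f x = c) :
    ∃ x : Fin n → ℍ, f x = 0 := by
  simp only [hf] at hnc ⊢
  obtain ⟨ℓ₀, hℓ₀L, hℓ₀, ha⟩ := exists_mem_ne_zero_and_coeff_ne_zero hnc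
  obtain ⟨t, ht⟩ : ∃ t, homogPartEval L a (∑ h, ℓ₀ h) t ≠ 0 := by
    by_contra! h
    exact ha (eq_zero_of_forall_sum_prod_pow_smul_eq_zero h (mem_filter.2 ⟨hℓ₀L, rfl⟩))
  have hdeg : 0 < ∑ h, ℓ₀ h := by
    obtain ⟨k, hk⟩ := Function.ne_iff.1 hℓ₀
    exact (Nat.pos_of_ne_zero hk).trans_le (single_le_sum (fun _ _ => Nat.zero_le _) (mem_univ k))
  obtain ⟨q, hq⟩ := Quaternion.exists_sum_pow_mul_eq_zero (c := fun m => homogPartEval L a m t)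
    (mem_image_of_mem _ hℓ₀L) hdeg ht
  exact ⟨fun h => t h • q, by rw [sum_mono_smul, hq]⟩

/-- Every nonconstant polynomial function `ℍⁿ → ℍ` has a zero. -/
theorem stmt19 (n : ℕ) (hn : 0 < n) (L : Finset (Fin n → ℕ)) (a : (Fin n → ℕ) → ℍ)
    (f : (Fin n → ℍ) → ℍ) (hf : ∀ x, f x = ∑ ℓ ∈ L, mono ℓ (a ℓ) x)
    (hnc : ¬ ∃ c : ℍ, ∀ x, f x = c) :
    ∃ x : Fin n → ℍ, f x = 0 :=
  stmt19_general n L a f hf hnc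

end
end
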